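/- arXiv:1807.03758 — 4 statements merged into one kernel-verified Lean document; each statement's English description precedes it below -/
import Mathlib

section
/- Let n0, m ≥ 1 and let H be the (n0+m)×(n0+m) Hermitian matrix given in block form by H = [[Â, B̂],[B̂†, Ĉ]], where Â is an n0×n0 Hermitian matrix, Ĉ is an m×m Hermitian matrix, and B̂ is an arbitrary n0×m complex matrix. Let E_A^min be the smallest eigenvalue of Â and suppose every eigenvalue of Ĉ is at least E_C^min, with E_C^min > E_A^min. Then the smallest eigenvalue of H is at least the smallest eigenvalue of the 2×2 real symmetric matrix [[E_A^min, ‖B̂‖],[‖B̂‖, E_C^min]], which in turn is at least E_A^min − ‖B̂‖²/(E_C^min − E_A^min). -/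
open Matrix

/-- The ℓ²→ℓ² operator norm (largest singular value) of a rectangular complex matrix. -/
noncomputable def matrixOpNorm {n m : ℕ} (B : Matrix (Fin n) (Fin m) ℂ) : ℝ :=
  ‖LinearMap.toContinuousLinearMap (Matrix.toEuclideanLin B)‖

private lemma myTerm (e : ℝ) (a : ℂ) :
    ((starRingEnd ℂ) a * ((e:ℂ) * a)).re = e * Complex.normSq a := by
  simp [Complex.normSq_apply, Complex.mul_re, Complex.mul_im]; ring

private lemma myQuadLower {n : Type*} [Fintype n] [DecidableEq n] {M : Matrix n n ℂ}
    (hM : M.IsHermitian) (t : ℝ) (h : ∀ i, t ≤ hM.eigenvalues i) (x : n → ℂ) :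
    t * RCLike.re (star x ⬝ᵥ x) ≤ RCLike.re (star x ⬝ᵥ (M *ᵥ x)) := by
  set U : Matrix n n ℂ := (hM.eigenvectorUnitary : Matrix n n ℂ) with hU
  set y : n → ℂ := star U *ᵥ x with hy
  have hUU : U * star U = 1 := (Matrix.mem_unitaryGroup_iff).mp hM.eigenvectorUnitary.2
  have hyx : star x ᵥ* U = star y := by
    rw [hy, star_mulVec, star_eq_conjTranspose, conjTranspose_conjTranspose]
  have key : star x ⬝ᵥ (M *ᵥ x)
      = star y ⬝ᵥ (Matrix.diagonal (RCLike.ofReal ∘ hM.eigenvalues) *ᵥ y) := by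
    conv_lhs => rw [hM.spectral_theorem, Unitary.conjStarAlgAut_apply]
    rw [← mulVec_mulVec, ← mulVec_mulVec, dotProduct_mulVec, hyx]
  have key2 : star x ⬝ᵥ x = star y ⬝ᵥ y := by
    rw [← hyx, ← dotProduct_mulVec, hy, mulVec_mulVec, hUU, one_mulVec]
  rw [key, key2]
  have h1 : RCLike.re (star y ⬝ᵥ (Matrix.diagonal (RCLike.ofReal ∘ hM.eigenvalues) *ᵥ y))
      = ∑ i, hM.eigenvalues i * Complex.normSq (y i) := by
    simp only [dotProduct, mulVec_diagonal, Function.comp_apply, Pi.star_apply,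
      RCLike.re_to_complex, Complex.re_sum, Complex.star_def]
    exact Finset.sum_congr rfl fun i _ => myTerm _ _
  have h2 : RCLike.re (star y ⬝ᵥ y) = ∑ i, Complex.normSq (y i) := by
    simp only [dotProduct, Pi.star_apply, RCLike.re_to_complex, Complex.re_sum, Complex.star_def]
    refine Finset.sum_congr rfl fun i _ => ?_
    simp [Complex.mul_re, Complex.normSq_apply]
  rw [h1, h2, Finset.mul_sum]
  refine Finset.sum_le_sum fun i _ => ?_
  exact mul_le_mul_of_nonneg_right (h i) (Complex.normSq_nonneg _)

private lemma myTrace {n : Type*} [Fintype n] [DecidableEq n] {M : Matrix n n ℝ}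
    (hM : M.IsHermitian) : M.trace = ∑ i, hM.eigenvalues i := by
  conv_lhs => rw [hM.spectral_theorem, Unitary.conjStarAlgAut_apply]
  rw [Matrix.trace_mul_cycle,
    (Matrix.mem_unitaryGroup_iff').mp hM.eigenvectorUnitary.2, one_mul, trace_diagonal]
  simp

set_option maxHeartbeats 1000000 in
/-- The smallest eigenvalue of the block Hermitian matrix
`[[Â, B̂],[B̂†, Ĉ]]` is at least the smallest eigenvalue of the 2×2 real symmetric matrix
`[[E_A^min, ‖B̂‖],[‖B̂‖, E_C^min]]`, which is at least
`E_A^min − ‖B̂‖²/(E_C^min − E_A^min)`. -/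
theorem block_hermitian_smallest_eigenvalue_lower_bound
    (n0 m : ℕ) (hn0 : 1 ≤ n0) (hm : 1 ≤ m)
    (A : Matrix (Fin n0) (Fin n0) ℂ) (C : Matrix (Fin m) (Fin m) ℂ)
    (B : Matrix (Fin n0) (Fin m) ℂ)
    (hA : A.IsHermitian) (hC : C.IsHermitian)
    (hH : (Matrix.fromBlocks A B Bᴴ C).IsHermitian)
    (EAmin ECmin : ℝ)
    (hEAmin : (∃ i, hA.eigenvalues i = EAmin) ∧ ∀ i, EAmin ≤ hA.eigenvalues i)
    (hCge : ∀ j, ECmin ≤ hC.eigenvalues j)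
    (hgap : EAmin < ECmin)
    (hM2 : (Matrix.of ![![EAmin, matrixOpNorm B], ![matrixOpNorm B, ECmin]]).IsHermitian) :
    (∀ k, (⨅ j, hM2.eigenvalues j) ≤ hH.eigenvalues k) ∧
      EAmin - matrixOpNorm B ^ 2 / (ECmin - EAmin) ≤ ⨅ j, hM2.eigenvalues j := by
  classical
  obtain ⟨-, hAge⟩ := hEAmin
  have hb : 0 ≤ matrixOpNorm B := norm_nonneg _
  set b := matrixOpNorm B with hbdef
  set lam := ⨅ j, hM2.eigenvalues j with hlamdef
  -- trace and determinant of the 2×2 matrix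
  have htr := myTrace hM2
  rw [Matrix.trace_fin_two] at htr
  simp only [Fin.sum_univ_two, Matrix.of_apply, Matrix.cons_val', Matrix.cons_val_zero,
    Matrix.cons_val_one, Matrix.head_cons, Matrix.empty_val', Matrix.cons_val_fin_one,
    Matrix.head_fin_const] at htr
  have hsum : hM2.eigenvalues 0 + hM2.eigenvalues 1 = EAmin + ECmin := by linarith
  have hdet := hM2.det_eq_prod_eigenvalues
  rw [Matrix.det_fin_two_of] at hdet
  simp only [Fin.prod_univ_two, RCLike.ofReal_real_eq_id, id_eq] at hdet
  have hprod : hM2.eigenvalues 0 * hM2.eigenvalues 1 = EAmin * ECmin - b * b := by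
    linarith [hdet]
  -- basic facts about lam
  have hbdd : BddBelow (Set.range hM2.eigenvalues) := Set.Finite.bddBelow (Set.finite_range _)
  have hle0 : lam ≤ hM2.eigenvalues 0 := ciInf_le hbdd 0
  have hle1 : lam ≤ hM2.eigenvalues 1 := ciInf_le hbdd 1
  have heq : lam = hM2.eigenvalues 0 ∨ lam = hM2.eigenvalues 1 := by
    rcases le_total (hM2.eigenvalues 0) (hM2.eigenvalues 1) with h | h
    · left
      refine le_antisymm hle0 (le_ciInf fun j => ?_)
      fin_cases j
      · exact le_rfl
      · exact h
    · right
      refine le_antisymm hle1 (le_ciInf fun j => ?_)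
      fin_cases j
      · exact h
      · exact le_rfl
  have hroot : lam^2 - (EAmin+ECmin)*lam + (EAmin*ECmin - b*b) = 0 := by
    rcases heq with h | h <;> rw [h]
    · linear_combination (hM2.eigenvalues 0) * hsum - hprod
    · linear_combination (hM2.eigenvalues 1) * hsum - hprod
  have hhalf : 2*lam ≤ EAmin + ECmin := by linarith
  have hla : lam ≤ EAmin := by nlinarith [hroot, hhalf, mul_self_nonneg b]
  have hlc : lam ≤ ECmin := by nlinarith [hroot, hhalf, mul_self_nonneg b]
  have hfac : (EAmin - lam) * (ECmin - lam) = b*b := by linear_combination hroot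
  constructor
  · intro k
    -- the quadratic-form lower bound for the block matrix
    have main : ∀ z : (Fin n0 ⊕ Fin m) → ℂ,
        lam * RCLike.re (star z ⬝ᵥ z)
          ≤ RCLike.re (star z ⬝ᵥ ((fromBlocks A B Bᴴ C) *ᵥ z)) := by
      intro z
      have hz : z = Sum.elim (z ∘ Sum.inl) (z ∘ Sum.inr) := by funext i; cases i <;> rfl
      rw [hz]
      set u : Fin n0 → ℂ := z ∘ Sum.inl with hu
      set w : Fin m → ℂ := z ∘ Sum.inr with hw
      rw [fromBlocks_mulVec, Function.star_sumElim]
      simp only [Sum.elim_comp_inl, Sum.elim_comp_inr]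
      rw [sumElim_dotProduct_sumElim, sumElim_dotProduct_sumElim,
        dotProduct_add, dotProduct_add]
      have hcross : star w ⬝ᵥ (Bᴴ *ᵥ u) = star (star u ⬝ᵥ (B *ᵥ w)) := by
        rw [star_dotProduct, star_mulVec, conjTranspose_conjTranspose, ← dotProduct_mulVec]
      set u' : EuclideanSpace ℂ (Fin n0) := (WithLp.equiv 2 _).symm u with hu'
      set w' : EuclideanSpace ℂ (Fin m) := (WithLp.equiv 2 _).symm w with hw'
      have hp : (0:ℝ) ≤ ‖u'‖ := norm_nonneg _
      have hq : (0:ℝ) ≤ ‖w'‖ := norm_nonneg _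
      have hu2 : RCLike.re (star u ⬝ᵥ u) = ‖u'‖^2 := by
        rw [← inner_self_eq_norm_sq (𝕜 := ℂ), dotProduct_comm]; rfl
      have hw2 : RCLike.re (star w ⬝ᵥ w) = ‖w'‖^2 := by
        rw [← inner_self_eq_norm_sq (𝕜 := ℂ), dotProduct_comm]; rfl
      have hd : ‖star u ⬝ᵥ (B *ᵥ w)‖ ≤ b * (‖u'‖ * ‖w'‖) := by
        have e1 : star u ⬝ᵥ (B *ᵥ w) = inner ℂ u' (Matrix.toEuclideanLin B w') := by
          rw [dotProduct_comm]; rfl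
        rw [e1]
        calc ‖(inner ℂ u' (Matrix.toEuclideanLin B w') : ℂ)‖
            ≤ ‖u'‖ * ‖Matrix.toEuclideanLin B w'‖ := norm_inner_le_norm _ _
          _ ≤ ‖u'‖ * (b * ‖w'‖) := by
              refine mul_le_mul_of_nonneg_left ?_ hp
              exact (LinearMap.toContinuousLinearMap (Matrix.toEuclideanLin B)).le_opNorm w'
          _ = b * (‖u'‖ * ‖w'‖) := by ring
      have hre_d : -(b*(‖u'‖*‖w'‖)) ≤ RCLike.re (star u ⬝ᵥ (B *ᵥ w)) := by
        have h1 : |RCLike.re (star u ⬝ᵥ (B *ᵥ w))| ≤ ‖star u ⬝ᵥ (B *ᵥ w)‖ :=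
          RCLike.abs_re_le_norm _
        have h2 := neg_abs_le (RCLike.re (star u ⬝ᵥ (B *ᵥ w)))
        linarith
      have hAq : EAmin * ‖u'‖^2 ≤ RCLike.re (star u ⬝ᵥ (A *ᵥ u)) := by
        have := myQuadLower hA EAmin hAge u
        rwa [hu2] at this
      have hCq : ECmin * ‖w'‖^2 ≤ RCLike.re (star w ⬝ᵥ (C *ᵥ w)) := by
        have := myQuadLower hC ECmin hCge w
        rwa [hw2] at this
      rw [hcross]
      simp only [map_add, hu2, hw2]
      have hsd : RCLike.re (star (star u ⬝ᵥ (B *ᵥ w))) = RCLike.re (star u ⬝ᵥ (B *ᵥ w)) := by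
        rw [RCLike.star_def, RCLike.conj_re]
      rw [hsd]
      set s1 := Real.sqrt (EAmin - lam) with hs1def
      set s2 := Real.sqrt (ECmin - lam) with hs2def
      have hs1 : s1^2 = EAmin - lam := Real.sq_sqrt (by linarith)
      have hs2 : s2^2 = ECmin - lam := Real.sq_sqrt (by linarith)
      have hs12 : s1 * s2 = b := by
        rw [hs1def, hs2def, ← Real.sqrt_mul (by linarith), hfac, Real.sqrt_mul_self hb]
      have expand : (s1*‖u'‖ - s2*‖w'‖)^2
          = (EAmin-lam)*‖u'‖^2 + (ECmin-lam)*‖w'‖^2 - 2*(b*(‖u'‖*‖w'‖)) := by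
        linear_combination ‖u'‖^2*hs1 + ‖w'‖^2*hs2 - 2*(‖u'‖*‖w'‖)*hs12
      linarith [expand, sq_nonneg (s1*‖u'‖ - s2*‖w'‖), hAq, hCq, hre_d]
    have hev := hH.eigenvalues_eq k
    have hn1 : ‖hH.eigenvectorBasis k‖ = 1 := hH.eigenvectorBasis.orthonormal.1 k
    have hv : RCLike.re (star ⇑(hH.eigenvectorBasis k) ⬝ᵥ ⇑(hH.eigenvectorBasis k)) = 1 := by
      have e1 : (star ⇑(hH.eigenvectorBasis k) ⬝ᵥ ⇑(hH.eigenvectorBasis k))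
          = inner ℂ (hH.eigenvectorBasis k) (hH.eigenvectorBasis k) := by
        rw [dotProduct_comm]; rfl
      rw [e1, inner_self_eq_norm_sq, hn1]
      norm_num
    calc lam = lam * RCLike.re (star ⇑(hH.eigenvectorBasis k) ⬝ᵥ ⇑(hH.eigenvectorBasis k)) := by
          rw [hv, mul_one]
      _ ≤ RCLike.re (star ⇑(hH.eigenvectorBasis k)
            ⬝ᵥ ((fromBlocks A B Bᴴ C) *ᵥ ⇑(hH.eigenvectorBasis k))) := main _
      _ = hH.eigenvalues k := hev.symm
  · have hg : 0 < ECmin - EAmin := by linarith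
    have h1 : (EAmin - lam) * (ECmin - EAmin) ≤ b^2 := by
      nlinarith [hfac, sq_nonneg (EAmin - lam)]
    have h2 : EAmin - lam ≤ b^2/(ECmin - EAmin) := (le_div_iff₀ hg).mpr h1
    linarith
end

section
/- Let A and M be Hermitian operators on a finite-dimensional complex inner product space. Let E_0 be the smallest eigenvalue of A, let P be the orthogonal projection onto the E_0-eigenspace of A, and Q = 1 − P. Assume every eigenvalue of A other than E_0 is at least E_0 + 1. Suppose there exists a unit vector φ in the range of Q with ⟨φ, (A − M)φ⟩ < E_0 + 1/2. Then A − (5/2)M has a unit eigenvector Ψ whose eigenvalue is less than E_0 − 1/4, and this Ψ satisfies ⟨Ψ, MΨ⟩ > 1/10. -/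
open Finset in
lemma rayleigh_aux {E : Type*} [NormedAddCommGroup E] [InnerProductSpace ℂ E]
    [FiniteDimensional ℂ E] {n : ℕ} (hn : Module.finrank ℂ E = n)
    {T : E →ₗ[ℂ] E} (hT : T.IsSymmetric) (c : ℝ) (x : E)
    (h : ∀ i, c ≤ hT.eigenvalues hn i ∨
      (inner ℂ (hT.eigenvectorBasis hn i) x : ℂ) = 0) :
    c * ‖x‖ ^ 2 ≤ (inner ℂ x (T x) : ℂ).re := by
  set b := hT.eigenvectorBasis hn with hb
  have hsum : (inner ℂ x (T x) : ℂ) = ∑ i, (inner ℂ x (b i) : ℂ) * inner ℂ (b i) (T x) :=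
    (b.sum_inner_mul_inner x (T x)).symm
  have hterm : ∀ i, (inner ℂ x (b i) : ℂ) * inner ℂ (b i) (T x)
      = ((hT.eigenvalues hn i * ‖(inner ℂ (b i) x : ℂ)‖ ^ 2 : ℝ) : ℂ) := by
    intro i
    have h1 : (inner ℂ (b i) (T x) : ℂ) = inner ℂ (T (b i)) x := (hT (b i) x).symm
    rw [h1, hT.apply_eigenvectorBasis hn i, inner_smul_left]
    have h2 : (inner ℂ x (b i) : ℂ) = starRingEnd ℂ (inner ℂ (b i) x) :=
      (inner_conj_symm _ _).symm
    rw [h2]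
    rw [RCLike.conj_ofReal]
    have h4 : (starRingEnd ℂ) (inner ℂ (b i) x : ℂ) * (inner ℂ (b i) x : ℂ)
        = ((‖(inner ℂ (b i) x : ℂ)‖ ^ 2 : ℝ) : ℂ) := by
      rw [RCLike.conj_mul]; norm_cast
    rw [Complex.ofReal_mul, ← h4, ← hb]
    exact mul_left_comm ((starRingEnd ℂ) (inner ℂ (b i) x)) ((hT.eigenvalues hn i : ℂ)) (inner ℂ (b i) x)
  have hre : (inner ℂ x (T x) : ℂ).re
      = ∑ i, hT.eigenvalues hn i * ‖(inner ℂ (b i) x : ℂ)‖ ^ 2 := by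
    rw [hsum]
    rw [Complex.re_sum]
    exact Finset.sum_congr rfl fun i _ => by rw [hterm i, Complex.ofReal_re]
  have hnorm : ‖x‖ ^ 2 = ∑ i, ‖(inner ℂ (b i) x : ℂ)‖ ^ 2 := by
    have hx : (inner ℂ x x : ℂ) = ∑ i, (inner ℂ x (b i) : ℂ) * inner ℂ (b i) x :=
      (b.sum_inner_mul_inner x x).symm
    have : (inner ℂ x x : ℂ) = ((‖x‖ ^ 2 : ℝ) : ℂ) := by
      rw [inner_self_eq_norm_sq_to_K]; norm_cast
    have hre' := congrArg Complex.re hx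
    rw [this] at hre'
    simp only [Complex.ofReal_re, Complex.re_sum] at hre'
    rw [hre']
    refine Finset.sum_congr rfl fun i _ => ?_
    have h2 : (inner ℂ x (b i) : ℂ) = starRingEnd ℂ (inner ℂ (b i) x) :=
      (inner_conj_symm _ _).symm
    rw [h2, RCLike.conj_mul]
    norm_cast
  rw [hre, hnorm, Finset.mul_sum]
  refine Finset.sum_le_sum fun i _ => ?_
  rcases h i with hi | hi
  · have := sq_nonneg ‖(inner ℂ (b i) x : ℂ)‖
    nlinarith
  · rw [hi]; simp

/-- If `A`, `M` are Hermitian, `E0` is the smallest eigenvalue of `A`, all other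
eigenvalues of `A` are at least `E0 + 1`, and some unit vector `φ` orthogonal to the
`E0`-eigenspace of `A` has `⟨φ,(A−M)φ⟩ < E0 + 1/2`, then `A − (5/2)M` has a unit eigenvector
`Ψ` with eigenvalue less than `E0 − 1/4`, and this `Ψ` satisfies `⟨Ψ, MΨ⟩ > 1/10`. -/
theorem low_eigenvector_of_Q_failure
    {E : Type*} [NormedAddCommGroup E] [InnerProductSpace ℂ E] [FiniteDimensional ℂ E]
    {n : ℕ} (hn : Module.finrank ℂ E = n)
    (A M : E →ₗ[ℂ] E) (hA : A.IsSymmetric) (hM : M.IsSymmetric)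
    (E0 : ℝ)
    (hE0mem : ∃ i, hA.eigenvalues hn i = E0)
    (hgap : ∀ i, hA.eigenvalues hn i = E0 ∨ E0 + 1 ≤ hA.eigenvalues hn i)
    (φ : E) (hφmem : φ ∈ (Module.End.eigenspace A (E0 : ℂ))ᗮ) (hφnorm : ‖φ‖ = 1)
    (hφ : (inner ℂ φ ((A - M) φ) : ℂ).re < E0 + 1/2) :
    ∃ (Ψ : E) (μ : ℝ), ‖Ψ‖ = 1 ∧
      (A - (5/2 : ℂ) • M) Ψ = (μ : ℂ) • Ψ ∧
      μ < E0 - 1/4 ∧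
      1/10 < (inner ℂ Ψ (M Ψ) : ℂ).re := by
  set B : E →ₗ[ℂ] E := A - (5/2 : ℂ) • M with hBdef
  have hB : B.IsSymmetric := by
    intro x y
    simp only [hBdef, LinearMap.sub_apply, LinearMap.smul_apply, inner_sub_left,
      inner_sub_right, inner_smul_left, inner_smul_right, hA x y, hM x y,
      (by norm_num : ((5/2:ℂ)) = ((5/2:ℝ):ℂ)), Complex.conj_ofReal]
  -- φ's Rayleigh quotient for A is ≥ E0 + 1
  have hAφ : (E0 + 1) * ‖φ‖ ^ 2 ≤ (inner ℂ φ (A φ) : ℂ).re := by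
    refine rayleigh_aux hn hA (E0 + 1) φ fun i => ?_
    rcases hgap i with hi | hi
    · right
      have hmem : hA.eigenvectorBasis hn i ∈ Module.End.eigenspace A (E0 : ℂ) := by
        have := (hA.hasEigenvector_eigenvectorBasis hn i).1
        rwa [hi] at this
      exact hφmem _ hmem
    · left; exact hi
  rw [hφnorm, one_pow, mul_one] at hAφ
  -- decompose the hypothesis
  have hsplit : (inner ℂ φ ((A - M) φ) : ℂ).re
      = (inner ℂ φ (A φ) : ℂ).re - (inner ℂ φ (M φ) : ℂ).re := by
    simp [inner_sub_right]
  rw [hsplit] at hφ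
  have hMφ : (1:ℝ)/2 < (inner ℂ φ (M φ) : ℂ).re := by linarith
  -- Rayleigh quotient of B at φ
  have hBφ : (inner ℂ φ (B φ) : ℂ).re
      = (inner ℂ φ (A φ) : ℂ).re - (5/2) * (inner ℂ φ (M φ) : ℂ).re := by
    simp [hBdef, inner_sub_right, inner_smul_right, Complex.mul_re]
  have hBφlt : (inner ℂ φ (B φ) : ℂ).re < E0 - 1/4 := by rw [hBφ]; linarith
  -- pick the minimal eigenvalue of B
  have hnpos : 0 < n := by
    rcases Nat.eq_zero_or_pos n with h0 | h
    · exfalso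
      have : Module.finrank ℂ E = 0 := hn.trans h0
      have hφ0 : φ = 0 := by
        have : Subsingleton E := by
          rw [← Module.finrank_zero_iff (R := ℂ)]; omega
        exact Subsingleton.elim _ _
      rw [hφ0, norm_zero] at hφnorm; norm_num at hφnorm
    · exact h
  have : Nonempty (Fin n) := ⟨⟨0, hnpos⟩⟩
  obtain ⟨i0, -, hi0⟩ := Finset.exists_min_image Finset.univ (hB.eigenvalues hn)
    ⟨Classical.arbitrary _, Finset.mem_univ _⟩
  set μ := hB.eigenvalues hn i0 with hμ
  set Ψ := hB.eigenvectorBasis hn i0 with hΨ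
  have hΨnorm : ‖Ψ‖ = 1 := (hB.eigenvectorBasis hn).orthonormal.1 i0
  have hΨeig : B Ψ = (μ : ℂ) • Ψ := hB.apply_eigenvectorBasis hn i0
  -- μ ≤ ⟨φ, Bφ⟩
  have hmin : μ * ‖φ‖ ^ 2 ≤ (inner ℂ φ (B φ) : ℂ).re :=
    rayleigh_aux hn hB μ φ fun i => Or.inl (hi0 i (Finset.mem_univ i))
  rw [hφnorm, one_pow, mul_one] at hmin
  have hμlt : μ < E0 - 1/4 := lt_of_le_of_lt hmin hBφlt
  -- ⟨Ψ, AΨ⟩ ≥ E0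
  have hAΨ : E0 * ‖Ψ‖ ^ 2 ≤ (inner ℂ Ψ (A Ψ) : ℂ).re := by
    refine rayleigh_aux hn hA E0 Ψ fun i => Or.inl ?_
    rcases hgap i with hi | hi
    · rw [hi]
    · linarith
  rw [hΨnorm, one_pow, mul_one] at hAΨ
  -- ⟨Ψ, BΨ⟩ = μ
  have hBΨ : (inner ℂ Ψ (B Ψ) : ℂ).re = μ := by
    rw [hΨeig, inner_smul_right]
    have : (inner ℂ Ψ Ψ : ℂ) = ((‖Ψ‖ ^ 2 : ℝ) : ℂ) := by
      rw [inner_self_eq_norm_sq_to_K]; norm_cast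
    rw [this, hΨnorm]
    norm_num
  have hBΨ' : (inner ℂ Ψ (B Ψ) : ℂ).re
      = (inner ℂ Ψ (A Ψ) : ℂ).re - (5/2) * (inner ℂ Ψ (M Ψ) : ℂ).re := by
    simp [hBdef, inner_sub_right, inner_smul_right, Complex.mul_re]
  refine ⟨Ψ, μ, hΨnorm, hΨeig, hμlt, ?_⟩
  have : μ = (inner ℂ Ψ (A Ψ) : ℂ).re - (5/2) * (inner ℂ Ψ (M Ψ) : ℂ).re := by
    rw [← hBΨ, hBΨ']
  linarith
end

section
/- Let N ≥ 1 and let x, z : Fin N → ℝ satisfy x_i² + z_i² ≤ 1 for every i. Then Σ_i |z_i| ≤ N · √(2(1 − (Σ_i x_i)/N)). -/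
/-- If `x_i² + z_i² ≤ 1` for all `i`, then
`Σ_i |z_i| ≤ N √(2(1 − (Σ_i x_i)/N))`. -/
theorem abs_sum_z_le_of_unit_disc
    (N : ℕ) (hN : 1 ≤ N) (x z : Fin N → ℝ) (h : ∀ i, x i ^ 2 + z i ^ 2 ≤ 1) :
    ∑ i, |z i| ≤ N * Real.sqrt (2 * (1 - (∑ i, x i) / N)) := by
  have hNpos : (0:ℝ) < N := by exact_mod_cast hN
  have hx1 : ∀ i, x i ≤ 1 := by
    intro i
    nlinarith [h i, sq_nonneg (z i), sq_nonneg (x i - 1)]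
  have step1 : ∀ i, |z i| ≤ Real.sqrt (2 * (1 - x i)) := by
    intro i
    rw [← Real.sqrt_sq_eq_abs]
    apply Real.sqrt_le_sqrt
    nlinarith [h i, sq_nonneg (x i - 1)]
  calc ∑ i, |z i| ≤ ∑ i, Real.sqrt (2 * (1 - x i)) :=
        Finset.sum_le_sum fun i _ => step1 i
    _ = ∑ i, Real.sqrt 1 * Real.sqrt (2 * (1 - x i)) := by simp
    _ ≤ Real.sqrt (∑ _i : Fin N, (1:ℝ)) * Real.sqrt (∑ i, 2 * (1 - x i)) :=
        Real.sum_sqrt_mul_sqrt_le _ (fun i => zero_le_one)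
          (fun i => by nlinarith [hx1 i])
    _ = N * Real.sqrt (2 * (1 - (∑ i, x i) / N)) := by
        rw [← Real.sqrt_mul (by positivity),
          show (N:ℝ) * Real.sqrt (2 * (1 - (∑ i, x i) / N))
            = Real.sqrt ((N:ℝ)^2 * (2 * (1 - (∑ i, x i) / N))) by
              conv_rhs => rw [Real.sqrt_mul (by positivity : (0:ℝ) ≤ (N:ℝ)^2),
                Real.sqrt_sq hNpos.le]]
        congr 1
        have hS : ∑ i : Fin N, 2 * (1 - x i) = 2 * (N:ℝ) - 2 * ∑ i, x i := by
          simp [mul_sub, Finset.sum_sub_distrib, Finset.mul_sum]; ring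
        rw [hS, Finset.sum_const]
        field_simp
        simp only [Finset.card_univ, Fintype.card_fin]
        ring
end

section
/- Let N ≥ 1 and identify computational basis states with functions x : Fin N → Bool. For f : (Fin N → Bool) → ℂ define (Xf)(x) = Σ_{i : Fin N} f(flip_i x), where flip_i x changes the i-th bit of x. Let f satisfy Σ_x |f(x)|² = 1, let S = −Σ_x |f(x)|² log₂ |f(x)|², and note that ⟨f, Xf⟩ = Σ_x Σ_i conj(f(x)) f(flip_i x) is real. Then for every p ∈ [0, 1/2] such that N·H(p) ≥ S, where H(p) = −p log₂ p − (1−p) log₂(1−p) is the binary entropy function, one has ⟨f, Xf⟩ ≤ 2N√(p(1−p)). -/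
/-- Flip the `i`-th bit of a computational basis state. -/
def flipBit {N : ℕ} (i : Fin N) (x : Fin N → Bool) : Fin N → Bool :=
  Function.update x i (!(x i))

/-- The transverse-field operator `X`: `(Xf)(x) = Σ_i f(flip_i x)`. -/
noncomputable def transX {N : ℕ} (f : (Fin N → Bool) → ℂ) : (Fin N → Bool) → ℂ :=
  fun x => ∑ i, f (flipBit i x)

/-- The binary entropy function in bits. -/
noncomputable def binEnt (p : ℝ) : ℝ :=
  -p * Real.logb 2 p - (1 - p) * Real.logb 2 (1 - p)

open Real Finset

section Aux

lemma exp_half_log {r : ℝ} (hr : 0 < r) : Real.exp (Real.log r / 2) = Real.sqrt r := by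
  rw [Real.sqrt_eq_rpow, Real.rpow_def_of_pos hr]
  ring_nf

lemma sinh_s_eq {q : ℝ} (h0 : 0 < q) (h1 : q < 1) :
    Real.sinh (Real.log ((1-q)/q) / 2) = (1-2*q)/(2*Real.sqrt (q*(1-q))) := by
  have h1q : (0:ℝ) < 1 - q := by linarith
  have hr : (0:ℝ) < (1-q)/q := by positivity
  have hr' : (0:ℝ) < q/(1-q) := by positivity
  rw [Real.sinh_eq, exp_half_log hr]
  have e1 : -(Real.log ((1-q)/q) / 2) = Real.log (q/(1-q)) / 2 := by
    rw [show q/(1-q) = ((1-q)/q)⁻¹ by rw [inv_div], Real.log_inv]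
    ring
  rw [e1, exp_half_log hr']
  have hsq : Real.sqrt q > 0 := Real.sqrt_pos.2 h0
  have hsq1 : Real.sqrt (1-q) > 0 := Real.sqrt_pos.2 h1q
  have e2 : Real.sqrt ((1-q)/q) = Real.sqrt (1-q) / Real.sqrt q := Real.sqrt_div h1q.le _
  have e3 : Real.sqrt (q/(1-q)) = Real.sqrt q / Real.sqrt (1-q) := Real.sqrt_div h0.le _
  have e4 : Real.sqrt (q*(1-q)) = Real.sqrt q * Real.sqrt (1-q) := Real.sqrt_mul h0.le _
  rw [e2, e3, e4]
  have s1 : Real.sqrt q ^ 2 = q := Real.sq_sqrt h0.le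
  have s2 : Real.sqrt (1-q) ^ 2 = 1 - q := Real.sq_sqrt h1q.le
  field_simp
  nlinarith [s1, s2]

lemma convexOn_sinh : ConvexOn ℝ (Set.Ici 0) Real.sinh := by
  apply convexOn_of_deriv2_nonneg (convex_Ici 0)
    Real.continuous_sinh.continuousOn
    Real.differentiable_sinh.differentiableOn
  · intro x hx
    rw [Real.deriv_sinh]
    exact (Real.differentiable_cosh _).differentiableWithinAt
  · intro x hx
    rw [interior_Ici] at hx
    have : deriv^[2] Real.sinh x = Real.sinh x := by
      simp [Function.iterate_succ, Real.deriv_sinh, Real.deriv_cosh]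
    rw [this]
    exact Real.sinh_nonneg_iff.2 hx.le

lemma sinh_slope {t s : ℝ} (ht : 0 ≤ t) (hts : t ≤ s) : s * Real.sinh t ≤ t * Real.sinh s := by
  rcases eq_or_lt_of_le (ht.trans hts) with h | hs
  · have hs0 : s = 0 := h.symm
    have ht0 : t = 0 := le_antisymm (hts.trans hs0.le) ht
    simp [hs0, ht0]
  · have hd : t / s ≤ 1 := div_le_one_of_le₀ hts hs.le
    have h1 : Real.sinh t ≤ (t/s) * Real.sinh s := by
      have h2 := convexOn_sinh.2 (Set.mem_Ici.2 (le_refl (0:ℝ))) (Set.mem_Ici.2 hs.le)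
        (show (0:ℝ) ≤ 1 - t/s by linarith) (show (0:ℝ) ≤ t/s by positivity) (by ring)
      have h3 : (1 - t/s) • (0:ℝ) + (t/s) • s = t := by
        rw [smul_zero, zero_add, smul_eq_mul, div_mul_cancel₀ t hs.ne']
      rw [h3] at h2
      simpa [Real.sinh_zero] using h2
    calc s * Real.sinh t ≤ s * ((t/s)*Real.sinh s) :=
          mul_le_mul_of_nonneg_left h1 (ht.trans hts)
      _ = t * Real.sinh s := by field_simp

lemma oneD (p : ℝ) (hp0 : 0 < p) (hp2 : p < 1/2) :
    ∃ μ : ℝ, 0 ≤ μ ∧ ∀ q : ℝ, 0 ≤ q → q ≤ 1 →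
      2 * Real.sqrt (q*(1-q)) ≤
        μ * Real.binEntropy q + (2*Real.sqrt (p*(1-p)) - μ * Real.binEntropy p) := by
  set t : ℝ := Real.log ((1-p)/p) / 2 with hts
  have hp1 : p < 1 := by linarith
  have ht : 0 < t := by
    have : (1:ℝ) < (1-p)/p := by
      rw [lt_div_iff₀ hp0]; linarith
    have := Real.log_pos this
    positivity
  set μ : ℝ := Real.sinh t / t with hμdef
  have hμ : 0 ≤ μ := by
    have := Real.sinh_nonneg_iff.2 ht.le
    positivity
  set Φ : ℝ → ℝ := fun q => μ * Real.binEntropy q - 2 * Real.sqrt (q*(1-q)) with hΦdef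
  have hΦd : ∀ q ∈ Set.Ioo (0:ℝ) 1, HasDerivAt Φ
      (2 * (μ * (Real.log ((1-q)/q) / 2) - Real.sinh (Real.log ((1-q)/q) / 2))) q := by
    intro q hq
    obtain ⟨hq0, hq1⟩ := hq
    have h1q : (0:ℝ) < 1 - q := by linarith
    have hne : q * (1-q) ≠ 0 := by positivity
    have hsq : (0:ℝ) < Real.sqrt (q*(1-q)) := Real.sqrt_pos.2 (by positivity)
    have hd1 : HasDerivAt (fun q : ℝ => q*(1-q)) (1-2*q) q := by
      have := (hasDerivAt_id q).mul ((hasDerivAt_const q (1:ℝ)).sub (hasDerivAt_id q))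
      refine this.congr_deriv ?_
      show 1 * (1 - q) + q * (0 - 1) = 1 - 2*q
      ring
    have hd2 := (hd1.sqrt hne).const_mul (2:ℝ)
    have hd3 := (Real.hasDerivAt_binEntropy (ne_of_gt hq0) (ne_of_lt hq1)).const_mul μ
    have hd4 := hd3.sub hd2
    refine hd4.congr_deriv ?_
    rw [sinh_s_eq hq0 hq1]
    rw [Real.log_div (by linarith) (ne_of_gt hq0)]
    field_simp
  have hs_nonneg : ∀ q : ℝ, 0 < q → q ≤ 1/2 → 0 ≤ Real.log ((1-q)/q) / 2 := by
    intro q hq0 hq2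
    have : (1:ℝ) ≤ (1-q)/q := by
      rw [le_div_iff₀ hq0]; linarith
    have := Real.log_nonneg this
    positivity
  have hs_mono : ∀ q r : ℝ, 0 < q → q ≤ r → r < 1 →
      Real.log ((1-r)/r) / 2 ≤ Real.log ((1-q)/q) / 2 := by
    intro q r hq0 hqr hr1
    have hr0 : 0 < r := lt_of_lt_of_le hq0 hqr
    have hle : (1-r)/r ≤ (1-q)/q := by
      rw [div_le_div_iff₀ hr0 hq0]
      nlinarith
    have h1r : (0:ℝ) < 1 - r := by linarith
    have := Real.log_le_log (by positivity) hle
    linarith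
  have hcont : Continuous Φ := by
    apply Continuous.sub
    · exact continuous_const.mul Real.binEntropy_continuous
    · exact continuous_const.mul (Real.continuous_sqrt.comp
        (continuous_id.mul (continuous_const.sub continuous_id)))
  have hA : AntitoneOn Φ (Set.Icc 0 p) := by
    apply antitoneOn_of_deriv_nonpos (convex_Icc 0 p) hcont.continuousOn
    · intro q hq
      rw [interior_Icc] at hq
      exact (hΦd q ⟨hq.1, lt_trans hq.2 hp1⟩).differentiableAt.differentiableWithinAt
    · intro q hq
      rw [interior_Icc] at hq
      have hmem : q ∈ Set.Ioo (0:ℝ) 1 := ⟨hq.1, lt_trans hq.2 hp1⟩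
      rw [(hΦd q hmem).deriv]
      set sq := Real.log ((1-q)/q) / 2 with hsqdef
      have hts : t ≤ sq := hs_mono q p hq.1 hq.2.le hp1
      have hkey : sq * Real.sinh t ≤ t * Real.sinh sq := sinh_slope ht.le hts
      have : μ * sq ≤ Real.sinh sq := by
        rw [hμdef, div_mul_eq_mul_div, div_le_iff₀ ht]
        nlinarith
      linarith
  have hB : MonotoneOn Φ (Set.Icc p (1/2)) := by
    apply monotoneOn_of_deriv_nonneg (convex_Icc p (1/2)) hcont.continuousOn
    · intro q hq
      rw [interior_Icc] at hq
      exact (hΦd q ⟨lt_trans hp0 hq.1, by linarith [hq.2]⟩).differentiableAt.differentiableWithinAt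
    · intro q hq
      rw [interior_Icc] at hq
      have hq0 : 0 < q := lt_trans hp0 hq.1
      have hmem : q ∈ Set.Ioo (0:ℝ) 1 := ⟨hq0, by linarith [hq.2]⟩
      rw [(hΦd q hmem).deriv]
      set sq := Real.log ((1-q)/q) / 2 with hsqdef
      have hsq0 : 0 ≤ sq := hs_nonneg q hq0 hq.2.le
      have hts : sq ≤ t := hs_mono p q hp0 hq.1.le (by linarith [hq.2])
      have hkey : t * Real.sinh sq ≤ sq * Real.sinh t := sinh_slope hsq0 hts
      have : Real.sinh sq ≤ μ * sq := by
        rw [hμdef, div_mul_eq_mul_div, le_div_iff₀ ht]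
        nlinarith
      linarith
  have hsym : ∀ q : ℝ, Φ (1-q) = Φ q := by
    intro q
    simp only [hΦdef]
    rw [Real.binEntropy_one_sub]
    congr 2
    ring
  have hpIcc : p ∈ Set.Icc (0:ℝ) p := ⟨hp0.le, le_refl p⟩
  have hpIcc2 : p ∈ Set.Icc p (1/2:ℝ) := ⟨le_refl p, hp2.le⟩
  have hΦp : ∀ q : ℝ, 0 ≤ q → q ≤ 1 → Φ p ≤ Φ q := by
    have half : ∀ q : ℝ, 0 ≤ q → q ≤ 1/2 → Φ p ≤ Φ q := by
      intro q hq0 hq2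
      rcases le_or_gt q p with h | h
      · exact hA ⟨hq0, h⟩ hpIcc h
      · exact hB hpIcc2 ⟨h.le, hq2⟩ h.le
    intro q hq0 hq1
    rcases le_or_gt q (1/2) with h | h
    · exact half q hq0 h
    · have := half (1-q) (by linarith) (by linarith)
      rwa [hsym q] at this
  refine ⟨μ, hμ, fun q hq0 hq1 => ?_⟩
  have := hΦp q hq0 hq1
  simp only [hΦdef] at this
  linarith

lemma flip_zero {N : ℕ} (b : Bool) (y : Fin N → Bool) :
    flipBit (0 : Fin (N+1)) (Fin.cons b y) = Fin.cons (!b) y := by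
  unfold flipBit
  rw [Fin.cons_zero, Fin.update_cons_zero]

lemma flip_succ {N : ℕ} (i : Fin N) (b : Bool) (y : Fin N → Bool) :
    flipBit i.succ (Fin.cons b y) = Fin.cons b (flipBit i y) := by
  unfold flipBit
  rw [Fin.cons_succ, Fin.cons_update]

lemma sum_eq_pair {N : ℕ} (F : (Fin (N+1) → Bool) → ℝ) :
    ∑ x, F x = (∑ y : Fin N → Bool, F (Fin.cons true y)) +
      ∑ y : Fin N → Bool, F (Fin.cons false y) := by
  rw [← Equiv.sum_comp (Fin.consEquiv (fun _ => Bool)) F, Fintype.sum_prod_type,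
    Fintype.sum_bool]
  rfl

lemma xlogx_split (M0 M : ℝ) (h : 0 ≤ M0) (hM : 0 < M) :
    M * ((M0/M) * Real.log (M0/M)) = M0 * Real.log M0 - M0 * Real.log M := by
  rcases eq_or_lt_of_le h with h0 | h0
  · simp [← h0]
  · rw [Real.log_div (ne_of_gt h0) (ne_of_gt hM)]
    field_simp

lemma combine_lemma (μ c : ℝ) (hμ : 0 ≤ μ)
    (h1 : ∀ q : ℝ, 0 ≤ q → q ≤ 1 → 2 * Real.sqrt (q*(1-q)) ≤ μ * Real.binEntropy q + c)
    (M0 M1 : ℝ) (hM0 : 0 ≤ M0) (hM1 : 0 ≤ M1) :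
    2 * (Real.sqrt M0 * Real.sqrt M1) +
      μ * (M0 * Real.log M0 + M1 * Real.log M1 - (M0+M1) * Real.log (M0+M1)) ≤
      c * (M0 + M1) := by
  rcases eq_or_lt_of_le (by positivity : (0:ℝ) ≤ M0 + M1) with hM | hM
  · have h0 : M0 = 0 := by linarith
    have h1' : M1 = 0 := by linarith
    simp [h0, h1']
  · have hq0 : 0 ≤ M0 / (M0+M1) := by positivity
    have hq1 : M0 / (M0+M1) ≤ 1 := by
      rw [div_le_one hM]; linarith
    have h1q : 1 - M0/(M0+M1) = M1 / (M0+M1) := by field_simp; ring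
    have key := h1 _ hq0 hq1
    have ha : Real.sqrt (M0/(M0+M1) * (1-M0/(M0+M1))) * (M0+M1) = Real.sqrt M0 * Real.sqrt M1 := by
      rw [h1q, div_mul_div_comm]
      rw [Real.sqrt_div (by positivity) _, Real.sqrt_mul hM0,
        Real.sqrt_mul_self hM.le]
      field_simp
    have hbe : Real.binEntropy (M0/(M0+M1)) =
        -((M0/(M0+M1)) * Real.log (M0/(M0+M1))) - (M1/(M0+M1)) * Real.log (M1/(M0+M1)) := by
      rw [Real.binEntropy, Real.log_inv, Real.log_inv, h1q]
      ring
    have e0 := xlogx_split M0 (M0+M1) hM0 hM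
    have e1 := xlogx_split M1 (M0+M1) hM1 hM
    have hb : (M0+M1) * Real.binEntropy (M0/(M0+M1)) =
        (M0+M1) * Real.log (M0+M1) - M0 * Real.log M0 - M1 * Real.log M1 := by
      rw [hbe]
      linear_combination -e0 - e1
    nlinarith [mul_le_mul_of_nonneg_right key hM.le, ha, hb]

lemma hyper_ind (μ c : ℝ) (hμ : 0 ≤ μ)
    (h1 : ∀ q : ℝ, 0 ≤ q → q ≤ 1 → 2 * Real.sqrt (q*(1-q)) ≤ μ * Real.binEntropy q + c) :
    ∀ (N : ℕ) (g : (Fin N → Bool) → ℝ), (∀ x, 0 ≤ g x) →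
    (∑ x, ∑ i, Real.sqrt (g x * g (flipBit i x))) ≤
      μ * ((∑ x, g x) * Real.log (∑ x, g x) - ∑ x, g x * Real.log (g x)) +
        N * c * (∑ x, g x) := by
  intro N
  induction N with
  | zero =>
    intro g hg
    have huniv : (univ : Finset (Fin 0 → Bool)) = {fun i => i.elim0} := by
      apply Finset.eq_singleton_iff_unique_mem.2
      constructor
      · exact mem_univ _
      · intro y _
        funext i
        exact i.elim0
    simp [huniv]
  | succ N IH =>
    intro g hg
    set g0 : (Fin N → Bool) → ℝ := fun y => g (Fin.cons false y) with hg0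
    set g1 : (Fin N → Bool) → ℝ := fun y => g (Fin.cons true y) with hg1
    have hg0' : ∀ y, 0 ≤ g0 y := fun y => hg _
    have hg1' : ∀ y, 0 ≤ g1 y := fun y => hg _
    set M0 := ∑ y, g0 y with hM0
    set M1 := ∑ y, g1 y with hM1
    have hM0' : 0 ≤ M0 := Finset.sum_nonneg (fun y _ => hg0' y)
    have hM1' : 0 ≤ M1 := Finset.sum_nonneg (fun y _ => hg1' y)
    have hMsum : ∑ x, g x = M1 + M0 := sum_eq_pair g
    have hEsum : ∑ x, g x * Real.log (g x) =
        (∑ y, g1 y * Real.log (g1 y)) + ∑ y, g0 y * Real.log (g0 y) :=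
      sum_eq_pair (fun x => g x * Real.log (g x))
    have hL : (∑ x, ∑ i, Real.sqrt (g x * g (flipBit i x))) =
        ((∑ y, Real.sqrt (g1 y * g0 y)) + ∑ y, Real.sqrt (g0 y * g1 y)) +
        ((∑ y, ∑ i, Real.sqrt (g1 y * g1 (flipBit i y))) +
         (∑ y, ∑ i, Real.sqrt (g0 y * g0 (flipBit i y)))) := by
      rw [sum_eq_pair (fun x => ∑ i, Real.sqrt (g x * g (flipBit i x)))]
      have ht : ∀ y : Fin N → Bool, ∑ i : Fin (N+1),
          Real.sqrt (g (Fin.cons true y) * g (flipBit i (Fin.cons true y))) =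
          Real.sqrt (g1 y * g0 y) + ∑ i : Fin N, Real.sqrt (g1 y * g1 (flipBit i y)) := by
        intro y
        rw [Fin.sum_univ_succ, flip_zero]
        simp only [Bool.not_true, hg0, hg1]
        congr 1
        exact Finset.sum_congr rfl (fun i _ => by rw [flip_succ])
      have hf : ∀ y : Fin N → Bool, ∑ i : Fin (N+1),
          Real.sqrt (g (Fin.cons false y) * g (flipBit i (Fin.cons false y))) =
          Real.sqrt (g0 y * g1 y) + ∑ i : Fin N, Real.sqrt (g0 y * g0 (flipBit i y)) := by
        intro y
        rw [Fin.sum_univ_succ, flip_zero]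
        simp only [Bool.not_false, hg0, hg1]
        congr 1
        exact Finset.sum_congr rfl (fun i _ => by rw [flip_succ])
      rw [Finset.sum_congr rfl (fun y _ => ht y), Finset.sum_congr rfl (fun y _ => hf y),
        Finset.sum_add_distrib, Finset.sum_add_distrib]
      ring
    have hCS : (∑ y, Real.sqrt (g1 y * g0 y)) ≤ Real.sqrt M1 * Real.sqrt M0 := by
      calc ∑ y, Real.sqrt (g1 y * g0 y) = ∑ y, Real.sqrt (g1 y) * Real.sqrt (g0 y) := by
            apply Finset.sum_congr rfl
            intro y _
            exact Real.sqrt_mul (hg1' y) _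
        _ ≤ Real.sqrt M1 * Real.sqrt M0 := Real.sum_sqrt_mul_sqrt_le _ hg1' hg0'
    have hCS' : (∑ y, Real.sqrt (g0 y * g1 y)) ≤ Real.sqrt M0 * Real.sqrt M1 := by
      calc ∑ y, Real.sqrt (g0 y * g1 y) = ∑ y, Real.sqrt (g0 y) * Real.sqrt (g1 y) := by
            apply Finset.sum_congr rfl
            intro y _
            exact Real.sqrt_mul (hg0' y) _
        _ ≤ Real.sqrt M0 * Real.sqrt M1 := Real.sum_sqrt_mul_sqrt_le _ hg0' hg1'
    have hIH0 := IH g0 hg0'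
    have hIH1 := IH g1 hg1'
    have hcomb := combine_lemma μ c hμ h1 M0 M1 hM0' hM1'
    rw [← hM0] at hIH0
    rw [← hM1] at hIH1
    rw [hL, hMsum, add_comm M1 M0, hEsum]
    push_cast
    nlinarith [hcomb, hIH0, hIH1, hCS, hCS']

lemma flip_invol {N : ℕ} (i : Fin N) : Function.Involutive (flipBit i) := by
  intro x
  unfold flipBit
  simp

lemma flip_ne {N : ℕ} (i : Fin N) (x : Fin N → Bool) : flipBit i x ≠ x := by
  intro h
  have := congrFun h i
  unfold flipBit at this
  rw [Function.update_self] at this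
  exact (x i).not_ne_self this

lemma binEnt_scale (p : ℝ) : binEnt p * Real.log 2 = Real.binEntropy p := by
  unfold binEnt Real.binEntropy Real.logb
  have h2 : Real.log 2 ≠ 0 := ne_of_gt (Real.log_pos (by norm_num))
  rw [Real.log_inv, Real.log_inv]
  field_simp
  ring

end Aux

/-- Tight log-Sobolev-type inequality on the hypercube: for a unit vector `f`
with measurement entropy `S = −Σ_x |f(x)|² log₂ |f(x)|²`, the quantity
`⟨f, Xf⟩ = Σ_x Σ_i conj(f(x)) f(flip_i x)` is real, and for every `p ∈ [0, 1/2]` with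
`N·H(p) ≥ S` one has `⟨f, Xf⟩ ≤ 2N√(p(1−p))`. -/
theorem transverse_field_entropy_bound
    (N : ℕ) (hN : 1 ≤ N)
    (f : (Fin N → Bool) → ℂ) (hnorm : ∑ x, ‖f x‖ ^ 2 = 1)
    (p : ℝ) (hp0 : 0 ≤ p) (hp2 : p ≤ 1 / 2)
    (hent : (-∑ x, ‖f x‖ ^ 2 * Real.logb 2 (‖f x‖ ^ 2))
      ≤ N * binEnt p) :
    (∑ x, (starRingEnd ℂ) (f x) * transX f x).im = 0 ∧
      (∑ x, (starRingEnd ℂ) (f x) * transX f x).re ≤ 2 * N * Real.sqrt (p * (1 - p)) := by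
  classical
  set q : (Fin N → Bool) → ℝ := fun x => ‖f x‖ ^ 2 with hqdef
  have hq : ∀ x, 0 ≤ q x := fun x => by positivity
  have hA : (∑ x, (starRingEnd ℂ) (f x) * transX f x) =
      ∑ x, ∑ i, (starRingEnd ℂ) (f x) * f (flipBit i x) := by
    apply Finset.sum_congr rfl
    intro x _
    unfold transX
    rw [Finset.mul_sum]
  -- imaginary part
  have hconj : (starRingEnd ℂ) (∑ x, (starRingEnd ℂ) (f x) * transX f x) =
      ∑ x, (starRingEnd ℂ) (f x) * transX f x := by
    rw [hA]
    rw [map_sum]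
    have : ∀ x, (starRingEnd ℂ) (∑ i, (starRingEnd ℂ) (f x) * f (flipBit i x)) =
        ∑ i, f x * (starRingEnd ℂ) (f (flipBit i x)) := by
      intro x
      rw [map_sum]
      apply Finset.sum_congr rfl
      intro i _
      rw [map_mul, Complex.conj_conj]
    rw [Finset.sum_congr rfl (fun x _ => this x)]
    rw [Finset.sum_comm]
    conv_rhs => rw [Finset.sum_comm]
    apply Finset.sum_congr rfl
    intro i _
    have hre := Equiv.sum_comp ((flip_invol i).toPerm)
      (fun x => f x * (starRingEnd ℂ) (f (flipBit i x)))
    calc ∑ x, f x * (starRingEnd ℂ) (f (flipBit i x))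
        = ∑ x, f (flipBit i x) * (starRingEnd ℂ) (f (flipBit i (flipBit i x))) := hre.symm
      _ = ∑ x, (starRingEnd ℂ) (f x) * f (flipBit i x) := by
          apply Finset.sum_congr rfl
          intro x _
          rw [flip_invol i x]
          ring
  have him : (∑ x, (starRingEnd ℂ) (f x) * transX f x).im = 0 :=
    Complex.conj_eq_iff_im.mp hconj
  refine ⟨him, ?_⟩
  -- real part bounded by sum of sqrt
  have hre_le : (∑ x, (starRingEnd ℂ) (f x) * transX f x).re ≤
      ∑ x, ∑ i, Real.sqrt (q x * q (flipBit i x)) := by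
    rw [hA, Complex.re_sum]
    apply Finset.sum_le_sum
    intro x _
    rw [Complex.re_sum]
    apply Finset.sum_le_sum
    intro i _
    have h1 : ((starRingEnd ℂ) (f x) * f (flipBit i x)).re ≤
        ‖(starRingEnd ℂ) (f x) * f (flipBit i x)‖ := Complex.re_le_norm _
    have h2 : ‖(starRingEnd ℂ) (f x) * f (flipBit i x)‖ =
        ‖f x‖ * ‖f (flipBit i x)‖ := by
      rw [norm_mul, Complex.norm_conj]
    have h3 : Real.sqrt (q x * q (flipBit i x)) =
        ‖f x‖ * ‖f (flipBit i x)‖ := by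
      rw [hqdef]
      rw [show ‖f x‖ ^ 2 * ‖f (flipBit i x)‖ ^ 2 =
        (‖f x‖ * ‖f (flipBit i x)‖)^2 by ring]
      exact Real.sqrt_sq (by positivity)
    rw [h3]
    linarith
  -- entropy in nats
  have hlog2 : (0:ℝ) < Real.log 2 := Real.log_pos (by norm_num)
  have hentn : (-∑ x, q x * Real.log (q x)) ≤ N * Real.binEntropy p := by
    have hmul := mul_le_mul_of_nonneg_right hent hlog2.le
    have hL : (-∑ x, q x * Real.logb 2 (q x)) * Real.log 2 = -∑ x, q x * Real.log (q x) := by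
      have hterm : ∀ x ∈ (univ : Finset (Fin N → Bool)),
          q x * Real.logb 2 (q x) * Real.log 2 = q x * Real.log (q x) := by
        intro x _
        rw [Real.logb]
        field_simp
      rw [neg_mul, Finset.sum_mul, Finset.sum_congr rfl hterm]
    have hR : (N : ℝ) * binEnt p * Real.log 2 = N * Real.binEntropy p := by
      rw [mul_assoc, binEnt_scale]
    rw [hL, hR] at hmul
    exact hmul
  rcases eq_or_lt_of_le hp0 with hp0' | hp0'
  · -- p = 0 case
    have hbe0 : binEnt p = 0 := by
      rw [← hp0']
      unfold binEnt
      simp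
    have hent0 : (-∑ x, q x * Real.logb 2 (q x)) ≤ 0 := by
      rw [hbe0] at hent
      simpa using hent
    have hqle1 : ∀ x, q x ≤ 1 := by
      intro x
      rw [← hnorm]
      exact Finset.single_le_sum (fun y _ => hq y) (mem_univ x)
    have hterm : ∀ x, q x * Real.logb 2 (q x) ≤ 0 := by
      intro x
      apply mul_nonpos_of_nonneg_of_nonpos (hq x)
      exact Real.logb_nonpos (by norm_num) (hq x) (hqle1 x)
    have hsum0 : ∑ x, q x * Real.logb 2 (q x) = 0 := by
      have h1 : ∑ x, q x * Real.logb 2 (q x) ≤ 0 := Finset.sum_nonpos (fun x _ => hterm x)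
      linarith
    have hall : ∀ x, q x = 0 ∨ q x = 1 := by
      intro x
      have : ∀ y ∈ (univ : Finset (Fin N → Bool)), -(q y * Real.logb 2 (q y)) = 0 := by
        rw [← Finset.sum_eq_zero_iff_of_nonneg (fun y _ => by linarith [hterm y])]
        rw [Finset.sum_neg_distrib, hsum0]
        ring
      have hx := this x (mem_univ x)
      have hx' : q x * Real.logb 2 (q x) = 0 := by linarith
      rcases mul_eq_zero.mp hx' with h | h
      · exact Or.inl h
      · rcases Real.logb_eq_zero.mp h with h' | h' | h' | h' | h' | h'
        · norm_num at h'
        · norm_num at h'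
        · norm_num at h'
        · exact Or.inl h'
        · exact Or.inr h'
        · exact absurd h' (by intro hcon; have := hq x; linarith)
    have hT0 : ∑ x, ∑ i, Real.sqrt (q x * q (flipBit i x)) = 0 := by
      apply Finset.sum_eq_zero
      intro x _
      apply Finset.sum_eq_zero
      intro i _
      rcases hall x with h | h
      · rw [h, zero_mul, Real.sqrt_zero]
      · rcases hall (flipBit i x) with h' | h'
        · rw [h', mul_zero, Real.sqrt_zero]
        · exfalso
          have hpair : q x + q (flipBit i x) ≤ 1 := by
            rw [← hnorm]
            have hsub : ({x, flipBit i x} : Finset (Fin N → Bool)) ⊆ univ := subset_univ _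
            have := Finset.sum_le_sum_of_subset_of_nonneg hsub (fun y _ _ => hq y)
            rwa [Finset.sum_pair (Ne.symm (flip_ne i x))] at this
          rw [h, h'] at hpair
          norm_num at hpair
    rw [← hp0']
    rw [show (0:ℝ) * (1 - 0) = 0 by ring, Real.sqrt_zero, mul_zero]
    linarith [hre_le, hT0.le]
  · -- 0 < p
    rcases eq_or_lt_of_le hp2 with hp2' | hp2'
    · -- p = 1/2
      have h1 : ∀ s : ℝ, 0 ≤ s → s ≤ 1 → 2 * Real.sqrt (s*(1-s)) ≤
          (0:ℝ) * Real.binEntropy s + 1 := by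
        intro s hs0 hs1
        have : Real.sqrt (s*(1-s)) ≤ 1/2 := by
          rw [show (1/2 : ℝ) = Real.sqrt ((1/2)^2) by rw [Real.sqrt_sq]; norm_num]
          apply Real.sqrt_le_sqrt
          nlinarith [sq_nonneg (s - 1/2)]
        linarith
      have hind := hyper_ind 0 1 (le_refl 0) h1 N q hq
      rw [hnorm] at hind
      simp only [Real.log_one, mul_zero, zero_mul, mul_one] at hind
      have : (∑ x, ∑ i, Real.sqrt (q x * q (flipBit i x))) ≤ N := by linarith
      have hrhs : 2 * (N:ℝ) * Real.sqrt (p * (1-p)) = N := by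
        rw [hp2']
        rw [show (1/2 : ℝ) * (1 - 1/2) = (1/2)^2 by ring, Real.sqrt_sq (by norm_num)]
        ring
      rw [hrhs]
      linarith
    · -- 0 < p < 1/2
      obtain ⟨μ, hμ, h1⟩ := oneD p hp0' hp2'
      have hind := hyper_ind μ (2*Real.sqrt (p*(1-p)) - μ * Real.binEntropy p) hμ h1 N q hq
      rw [hnorm] at hind
      simp only [Real.log_one, mul_zero, zero_mul] at hind
      have hstep : μ * (0 - ∑ x, q x * Real.log (q x)) ≤ μ * (N * Real.binEntropy p) := by
        apply mul_le_mul_of_nonneg_left _ hμ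
        rw [zero_sub]
        exact hentn
      have : (∑ x, ∑ i, Real.sqrt (q x * q (flipBit i x))) ≤
          μ * (N * Real.binEntropy p) +
            N * (2*Real.sqrt (p*(1-p)) - μ * Real.binEntropy p) * 1 := by
        calc (∑ x, ∑ i, Real.sqrt (q x * q (flipBit i x))) ≤
            μ * (0 - ∑ x, q x * Real.log (q x)) +
              N * (2*Real.sqrt (p*(1-p)) - μ * Real.binEntropy p) * 1 := by
                convert hind using 3 <;> ring
          _ ≤ _ := by linarith
      have hfin : μ * (N * Real.binEntropy p) +
          N * (2*Real.sqrt (p*(1-p)) - μ * Real.binEntropy p) * 1 =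
          2 * N * Real.sqrt (p*(1-p)) := by ring
      rw [hfin] at this
      linarith
end
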